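/- arXiv:2510.03927 — 2 statements merged into one kernel-verified Lean document; each statement's English description precedes it below -/
import Mathlib

section
/- Let d ≥ 2 and let a, f̃₁, …, f̃_d be smooth functions on an open set U ⊆ ℝ^d with a > 0; set ã := -ln a, f̃ := Σ_{i=1}^d f̃_i, and for 1 ≤ i ≤ d let L_i' g := ∂_i² g - (∂_i ã)(∂_i g). Define f_{h,i} := -a (h² f̃_i + (1/12) h⁴ L_i' f̃_i) and, for 1 ≤ i < j ≤ d, f_{h,i,j} := -a (h² (f̃_i + f̃_j) + (1/12) h⁴ (L_i' + L_j')(f̃_i + f̃_j)). Then pointwise on U and for every h: -a (h² f̃ + (1/12) h⁴ (Δf̃ - ∇ã·∇f̃)) = Σ_{1 ≤ i < j ≤ d} f_{h,i,j} - (d-2) Σ_{i=1}^d f_{h,i}. -/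
open Finset

namespace PaperFDM

variable {d : ℕ}

/-- Partial derivative along coordinate `i`. -/
noncomputable def pd (i : Fin d) (g : (Fin d → ℝ) → ℝ) : (Fin d → ℝ) → ℝ :=
  fun x => fderiv ℝ g x (Pi.single i 1)

/-- `ã := -ln a`. -/
noncomputable def ta (a : (Fin d → ℝ) → ℝ) : (Fin d → ℝ) → ℝ :=
  fun y => -Real.log (a y)

/-- The one-dimensional operator `L_i' g := ∂_i² g - (∂_i ã)(∂_i g)`. -/
noncomputable def Lip (i : Fin d) (tA g : (Fin d → ℝ) → ℝ) : (Fin d → ℝ) → ℝ :=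
  fun x => pd i (pd i g) x - pd i tA x * pd i g x

/-- The integer multi-index `e_j`. -/
def unitZ (j : Fin d) : Fin d → ℤ := fun i => if i = j then 1 else 0

/-- The compact stencil `S = {-1,0,1}^d`. -/
def Sd (d : ℕ) : Finset (Fin d → ℤ) := Fintype.piFinset fun _ => ({-1, 0, 1} : Finset ℤ)

/-- The shifted point `c* + ph`. -/
def shiftPt (x : Fin d → ℝ) (p : Fin d → ℤ) (h : ℝ) : Fin d → ℝ :=
  fun i => x i + (p i : ℝ) * h

/-- The open unit hypercube `Ω = (0,1)^d`. -/
def Omega (d : ℕ) : Set (Fin d → ℝ) := {x | ∀ i, x i ∈ Set.Ioo (0 : ℝ) 1}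

/-- The closed unit hypercube. -/
def OmegaCl (d : ℕ) : Set (Fin d → ℝ) := {x | ∀ i, x i ∈ Set.Icc (0 : ℝ) 1}

/-- The elliptic operator `L u = -∇·(a∇u)`. -/
noncomputable def Lop (a u : (Fin d → ℝ) → ℝ) : (Fin d → ℝ) → ℝ :=
  fun x => -∑ i, pd i (fun y => a y * pd i u y) x

/-- `u` solves the variable Poisson equation with source `f` on `Ω`. -/
def solvesPDE (a f u : (Fin d → ℝ) → ℝ) : Prop :=
  ∀ x ∈ Omega d, Lop a u x = f x

/-- Value of the one-axis stencil at an edge point: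
`a·(-1 + h²(∂_i²ã + (∂_iã)²)/24)` evaluated at `y`. -/
noncomputable def oneAxisEdge (a : (Fin d → ℝ) → ℝ) (i : Fin d) (h : ℝ)
    (y : Fin d → ℝ) : ℝ :=
  a y * (-1 + (1 / 24) * h ^ 2 * (pd i (pd i (ta a)) y + (pd i (ta a) y) ^ 2))

/-- The one-axis stencil coefficients `C_{p,i}(c*)`. -/
noncomputable def oneAxisC (a : (Fin d → ℝ) → ℝ) (i : Fin d) (h : ℝ)
    (p : Fin d → ℤ) (x : Fin d → ℝ) : ℝ :=
  if p = unitZ i ∨ p = -unitZ i then oneAxisEdge a i h (shiftPt x p (h / 2))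
  else if p = 0 then
    -(oneAxisEdge a i h (shiftPt x (unitZ i) (h / 2))
      + oneAxisEdge a i h (shiftPt x (-unitZ i) (h / 2)))
  else 0

/-- The two-axis stencil coefficients `C_{p,i,j}(c*)` at the nonzero stencil points. -/
noncomputable def twoAxisCnz (a : (Fin d → ℝ) → ℝ) (i j : Fin d) (h : ℝ)
    (p : Fin d → ℤ) (x : Fin d → ℝ) : ℝ :=
  if p = unitZ i ∨ p = -unitZ i then
    a (shiftPt x p (h / 2)) * (-(2 / 3) + (1 / 24) * h ^ 2 *
      ((pd i (ta a) (shiftPt x p (h / 2))) ^ 2 + (pd j (ta a) (shiftPt x p (h / 2))) ^ 2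
        + pd i (pd i (ta a)) (shiftPt x p (h / 2)) - pd j (pd j (ta a)) (shiftPt x p (h / 2))))
  else if p = unitZ j ∨ p = -unitZ j then
    a (shiftPt x p (h / 2)) * (-(2 / 3) + (1 / 24) * h ^ 2 *
      ((pd i (ta a) (shiftPt x p (h / 2))) ^ 2 + (pd j (ta a) (shiftPt x p (h / 2))) ^ 2
        - pd i (pd i (ta a)) (shiftPt x p (h / 2)) + pd j (pd j (ta a)) (shiftPt x p (h / 2))))
  else if p = unitZ i + unitZ j ∨ p = -(unitZ i + unitZ j) then
    a (shiftPt x p (h / 2)) * (-(1 / 6) + (1 / 24) * h ^ 2 *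
      pd i (pd j (ta a)) (shiftPt x p (h / 2)))
  else if p = unitZ i - unitZ j ∨ p = -(unitZ i - unitZ j) then
    a (shiftPt x p (h / 2)) * (-(1 / 6) - (1 / 24) * h ^ 2 *
      pd i (pd j (ta a)) (shiftPt x p (h / 2)))
  else 0

/-- The two-axis stencil coefficients `C_{p,i,j}(c*)`, with
`C_{0,i,j} = -Σ_{p ≠ 0} C_{p,i,j}`. -/
noncomputable def twoAxisC (a : (Fin d → ℝ) → ℝ) (i j : Fin d) (h : ℝ)
    (p : Fin d → ℤ) (x : Fin d → ℝ) : ℝ :=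
  if p = 0 then -∑ q ∈ (Sd d).erase 0, twoAxisCnz a i j h q x
  else twoAxisCnz a i j h p x

/-- The combined `d`-dimensional stencil coefficients
`C_p := Σ_{i<j} C_{p,i,j} - (d-2) Σ_i C_{p,i}`. -/
noncomputable def combC (a : (Fin d → ℝ) → ℝ) (h : ℝ) (p : Fin d → ℤ)
    (x : Fin d → ℝ) : ℝ :=
  (∑ q ∈ univ.filter (fun q : Fin d × Fin d => q.1 < q.2), twoAxisC a q.1 q.2 h p x)
    - ((d : ℝ) - 2) * ∑ i, oneAxisC a i h p x

end PaperFDM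

section AuxLemmas
open PaperFDM Finset

open PaperFDM

variable {d : ℕ} {U : Set (Fin d → ℝ)}

lemma myDiffAt (hU : IsOpen U) {g : (Fin d → ℝ) → ℝ} (hg : ContDiffOn ℝ (⊤ : ℕ∞) g U)
    {x : Fin d → ℝ} (hx : x ∈ U) : DifferentiableAt ℝ g x :=
  (hg.contDiffAt (hU.mem_nhds hx)).differentiableAt (by simp)

lemma pd_contDiffOn (hU : IsOpen U) {g : (Fin d → ℝ) → ℝ} (hg : ContDiffOn ℝ (⊤ : ℕ∞) g U)
    (i : Fin d) : ContDiffOn ℝ (⊤ : ℕ∞) (pd i g) U :=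
  (hg.fderiv_of_isOpen hU (by simp)).clm_apply contDiffOn_const

lemma pd_sum (hU : IsOpen U) {ι : Type*} {s : Finset ι} {g : ι → (Fin d → ℝ) → ℝ}
    (hg : ∀ j ∈ s, ContDiffOn ℝ (⊤ : ℕ∞) (g j) U) (i : Fin d) {x : Fin d → ℝ} (hx : x ∈ U) :
    pd i (fun y => ∑ j ∈ s, g j y) x = ∑ j ∈ s, pd i (g j) x := by
  simp only [pd]
  rw [fderiv_fun_sum fun j hj => myDiffAt hU (hg j hj) hx]
  simp

lemma pd_pd_sum (hU : IsOpen U) {ι : Type*} {s : Finset ι} {g : ι → (Fin d → ℝ) → ℝ}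
    (hg : ∀ j ∈ s, ContDiffOn ℝ (⊤ : ℕ∞) (g j) U) (i : Fin d) {x : Fin d → ℝ} (hx : x ∈ U) :
    pd i (pd i (fun y => ∑ j ∈ s, g j y)) x = ∑ j ∈ s, pd i (pd i (g j)) x := by
  have h1 : (fun y => ∑ j ∈ s, pd i (g j) y) =ᶠ[nhds x] pd i (fun y => ∑ j ∈ s, g j y) :=
    Filter.eventually_of_mem (hU.mem_nhds hx) fun y hy => (pd_sum hU hg i hy).symm
  have h2 : pd i (pd i (fun y => ∑ j ∈ s, g j y)) x
      = pd i (fun y => ∑ j ∈ s, pd i (g j) y) x := by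
    simp only [pd] at h1 ⊢
    rw [h1.fderiv_eq]
  rw [h2, pd_sum hU (fun j hj => pd_contDiffOn hU (hg j hj) i) i hx]


lemma pd_add {d : ℕ} {U : Set (Fin d → ℝ)} (hU : IsOpen U) {f g : (Fin d → ℝ) → ℝ}
    (hf : ContDiffOn ℝ (⊤ : ℕ∞) f U) (hg : ContDiffOn ℝ (⊤ : ℕ∞) g U) (i : Fin d)
    {x : Fin d → ℝ} (hx : x ∈ U) :
    pd i (fun y => f y + g y) x = pd i f x + pd i g x := by
  simp only [pd]
  rw [fderiv_fun_add (myDiffAt hU hf hx) (myDiffAt hU hg hx)]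
  simp

lemma pd_pd_add {d : ℕ} {U : Set (Fin d → ℝ)} (hU : IsOpen U) {f g : (Fin d → ℝ) → ℝ}
    (hf : ContDiffOn ℝ (⊤ : ℕ∞) f U) (hg : ContDiffOn ℝ (⊤ : ℕ∞) g U) (i : Fin d)
    {x : Fin d → ℝ} (hx : x ∈ U) :
    pd i (pd i (fun y => f y + g y)) x = pd i (pd i f) x + pd i (pd i g) x := by
  have h1 : (fun y => pd i f y + pd i g y) =ᶠ[nhds x] pd i (fun y => f y + g y) :=
    Filter.eventually_of_mem (hU.mem_nhds hx) fun y hy => (pd_add hU hf hg i hy).symm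
  have h2 : pd i (pd i (fun y => f y + g y)) x
      = pd i (fun y => pd i f y + pd i g y) x := by
    simp only [pd] at h1 ⊢
    rw [h1.fderiv_eq]
  rw [h2, pd_add hU (pd_contDiffOn hU hf i) (pd_contDiffOn hU hg i) i hx]

lemma Lip_add {d : ℕ} {U : Set (Fin d → ℝ)} (hU : IsOpen U) (tA : (Fin d → ℝ) → ℝ)
    {f g : (Fin d → ℝ) → ℝ} (hf : ContDiffOn ℝ (⊤ : ℕ∞) f U) (hg : ContDiffOn ℝ (⊤ : ℕ∞) g U)
    (i : Fin d) {x : Fin d → ℝ} (hx : x ∈ U) :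
    Lip i tA (fun y => f y + g y) x = Lip i tA f x + Lip i tA g x := by
  simp only [Lip, pd_add hU hf hg i hx, pd_pd_add hU hf hg i hx]
  ring


lemma tri {d : ℕ} (L : Fin d → Fin d → ℝ) :
    ∑ q ∈ univ.filter (fun q : Fin d × Fin d => q.1 < q.2), (L q.1 q.2 + L q.2 q.1)
      = (∑ i, ∑ j, L i j) - ∑ i, L i i := by
  have htot : ∑ q : Fin d × Fin d, L q.1 q.2 = ∑ i, ∑ j, L i j := by
    rw [Fintype.sum_prod_type]
  have hsplit := Finset.sum_filter_add_sum_filter_not (univ : Finset (Fin d × Fin d))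
    (fun q => q.1 < q.2) (fun q => L q.1 q.2)
  have hsplit2 := Finset.sum_filter_add_sum_filter_not
    ((univ : Finset (Fin d × Fin d)).filter (fun q => ¬ q.1 < q.2))
    (fun q => q.1 = q.2) (fun q => L q.1 q.2)
  have hfe : ((univ : Finset (Fin d × Fin d)).filter (fun q => ¬ q.1 < q.2)).filter
      (fun q => q.1 = q.2) = univ.filter (fun q : Fin d × Fin d => q.1 = q.2) := by
    rw [Finset.filter_filter]
    apply Finset.filter_congr
    intro q _
    simp only [Fin.lt_def, Fin.ext_iff, eq_iff_iff]
    omega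
  have hfg : ((univ : Finset (Fin d × Fin d)).filter (fun q => ¬ q.1 < q.2)).filter
      (fun q => ¬ q.1 = q.2) = univ.filter (fun q : Fin d × Fin d => q.2 < q.1) := by
    rw [Finset.filter_filter]
    apply Finset.filter_congr
    intro q _
    simp only [Fin.lt_def, Fin.ext_iff, eq_iff_iff]
    omega
  have hdiag : ∑ q ∈ univ.filter (fun q : Fin d × Fin d => q.1 = q.2), L q.1 q.2
      = ∑ i, L i i := by
    refine Finset.sum_nbij' (fun q => q.1) (fun i => (i, i)) ?_ ?_ ?_ ?_ ?_
    · intro q _; exact mem_univ _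
    · intro i _; simp
    · intro q hq; obtain ⟨q1, q2⟩ := q; simp only [mem_filter] at hq
      simp [hq.2]
    · intro i _; rfl
    · intro q hq; simp only [mem_filter] at hq; rw [← hq.2]
  have hswap : ∑ q ∈ univ.filter (fun q : Fin d × Fin d => q.2 < q.1), L q.1 q.2
      = ∑ q ∈ univ.filter (fun q : Fin d × Fin d => q.1 < q.2), L q.2 q.1 := by
    refine Finset.sum_nbij' Prod.swap Prod.swap ?_ ?_ ?_ ?_ ?_ <;> simp
  rw [Finset.sum_add_distrib]
  rw [hfe, hfg, hdiag, hswap] at hsplit2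
  linarith [htot, hsplit, hsplit2]

lemma alg (d : ℕ) (A c h2 : ℝ) (F : Fin d → ℝ) (L : Fin d → Fin d → ℝ) :
    -A * (h2 * ∑ i, F i + c * ∑ i, ∑ j, L i j)
      = (∑ q ∈ univ.filter (fun q : Fin d × Fin d => q.1 < q.2),
          (-A * (h2 * (F q.1 + F q.2)
            + c * ((L q.1 q.1 + L q.1 q.2) + (L q.2 q.1 + L q.2 q.2)))))
        - ((d : ℝ) - 2) * ∑ i, (-A * (h2 * F i + c * L i i)) := by
  have h1 : ∀ q ∈ univ.filter (fun q : Fin d × Fin d => q.1 < q.2),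
      (-A * (h2 * (F q.1 + F q.2)
        + c * ((L q.1 q.1 + L q.1 q.2) + (L q.2 q.1 + L q.2 q.2))))
      = (fun i j => -A * (h2 * F i + c * (L i i + L i j))) q.1 q.2
        + (fun i j => -A * (h2 * F i + c * (L i i + L i j))) q.2 q.1 := by
    intro q _; simp only; ring
  rw [Finset.sum_congr rfl h1, tri (fun i j => -A * (h2 * F i + c * (L i i + L i j)))]
  have h2' : ∀ i : Fin d, ∑ j, -A * (h2 * F i + c * (L i i + L i j))
      = (d : ℝ) * (-A * h2 * F i - A * c * L i i) + (-A * c) * ∑ j, L i j := by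
    intro i
    rw [Finset.sum_congr rfl (fun j (_ : j ∈ univ) => by ring :
      ∀ j ∈ univ, -A * (h2 * F i + c * (L i i + L i j))
        = (-A * h2 * F i - A * c * L i i) + (-A * c) * L i j)]
    rw [Finset.sum_add_distrib, Finset.sum_const, ← Finset.mul_sum, card_univ,
      Fintype.card_fin, nsmul_eq_mul]
  rw [Finset.sum_congr rfl (fun i _ => h2' i), Finset.sum_add_distrib,
    ← Finset.mul_sum, ← Finset.mul_sum]
  have h3 : ∑ i : Fin d, (-A * h2 * F i - A * c * L i i)
      = -A * h2 * ∑ i, F i - A * c * ∑ i, L i i := by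
    rw [Finset.sum_sub_distrib, ← Finset.mul_sum, ← Finset.mul_sum]
  have h4 : ∑ i : Fin d, -A * (h2 * F i + c * L i i)
      = -A * h2 * ∑ i, F i - A * c * ∑ i, L i i := by
    rw [Finset.sum_congr rfl (fun i (_ : i ∈ univ) => by ring :
      ∀ i ∈ univ, -A * (h2 * F i + c * L i i) = -A * h2 * F i + (- A * c) * L i i),
      Finset.sum_add_distrib, ← Finset.mul_sum, ← Finset.mul_sum]
    ring
  have h5 : ∑ i : Fin d, -A * (h2 * F i + c * (L i i + L i i))
      = -A * h2 * ∑ i, F i - 2 * A * c * ∑ i, L i i := by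
    rw [Finset.sum_congr rfl (fun i (_ : i ∈ univ) => by ring :
      ∀ i ∈ univ, -A * (h2 * F i + c * (L i i + L i i))
        = -A * h2 * F i + (- 2 * A * c) * L i i),
      Finset.sum_add_distrib, ← Finset.mul_sum, ← Finset.mul_sum]
    ring
  rw [h3, h4, h5]
  ring

end AuxLemmas

open PaperFDM Finset in
/-- the bilinear decomposition of the right-hand side grid function:
`-a(h²f̃ + h⁴(Δf̃ - ∇ã·∇f̃)/12) = Σ_{i<j} f_{h,i,j} - (d-2) Σ_i f_{h,i}`, pointwise on `U`. -/
theorem statement_15 (d : ℕ) (hd : 2 ≤ d) (U : Set (Fin d → ℝ)) (hU : IsOpen U)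
    (a : (Fin d → ℝ) → ℝ) (fti : Fin d → (Fin d → ℝ) → ℝ)
    (ha : ContDiffOn ℝ (⊤ : ℕ∞) a U) (hfti : ∀ i, ContDiffOn ℝ (⊤ : ℕ∞) (fti i) U)
    (hapos : ∀ x ∈ U, 0 < a x) :
    ∀ x ∈ U, ∀ h : ℝ,
      -a x * (h ^ 2 * (∑ i, fti i x)
        + (1 / 12) * h ^ 4 *
          ((∑ i, pd i (pd i (fun y => ∑ i', fti i' y)) x)
            - ∑ i, pd i (ta a) x * pd i (fun y => ∑ i', fti i' y) x))
      = (∑ q ∈ univ.filter (fun q : Fin d × Fin d => q.1 < q.2),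
          (-a x * (h ^ 2 * (fti q.1 x + fti q.2 x)
            + (1 / 12) * h ^ 4 *
              (Lip q.1 (ta a) (fun y => fti q.1 y + fti q.2 y) x
                + Lip q.2 (ta a) (fun y => fti q.1 y + fti q.2 y) x))))
        - ((d : ℝ) - 2) *
          ∑ i, (-a x * (h ^ 2 * fti i x + (1 / 12) * h ^ 4 * Lip i (ta a) (fti i) x)) := by

  intro x hx h
  have hdsum : ∀ j ∈ (univ : Finset (Fin d)), ContDiffOn ℝ (⊤ : ℕ∞) (fti j) U :=
    fun j _ => hfti j
  have c1 : ∀ i : Fin d, pd i (fun y => ∑ i', fti i' y) x = ∑ j, pd i (fti j) x :=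
    fun i => pd_sum hU hdsum i hx
  have c2 : ∀ i : Fin d, pd i (pd i (fun y => ∑ i', fti i' y)) x
      = ∑ j, pd i (pd i (fti j)) x := fun i => pd_pd_sum hU hdsum i hx
  have LHSeq : (∑ i, pd i (pd i (fun y => ∑ i', fti i' y)) x)
      - ∑ i, pd i (ta a) x * pd i (fun y => ∑ i', fti i' y) x
      = ∑ i, ∑ j, Lip i (ta a) (fti j) x := by
    rw [Finset.sum_congr rfl (fun i (_ : i ∈ univ) => c2 i),
      Finset.sum_congr rfl (fun i (_ : i ∈ univ) => by rw [c1 i] :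
        ∀ i ∈ univ, pd i (ta a) x * pd i (fun y => ∑ i', fti i' y) x
          = pd i (ta a) x * ∑ j, pd i (fti j) x),
      ← Finset.sum_sub_distrib]
    refine Finset.sum_congr rfl fun i _ => ?_
    rw [Finset.mul_sum, ← Finset.sum_sub_distrib]
    rfl
  have pairEq : ∀ q ∈ univ.filter (fun q : Fin d × Fin d => q.1 < q.2),
      -a x * (h ^ 2 * (fti q.1 x + fti q.2 x)
        + (1 / 12) * h ^ 4 *
          (Lip q.1 (ta a) (fun y => fti q.1 y + fti q.2 y) x
            + Lip q.2 (ta a) (fun y => fti q.1 y + fti q.2 y) x))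
      = -a x * (h ^ 2 * (fti q.1 x + fti q.2 x)
        + (1 / 12) * h ^ 4 *
          ((Lip q.1 (ta a) (fti q.1) x + Lip q.1 (ta a) (fti q.2) x)
            + (Lip q.2 (ta a) (fti q.1) x + Lip q.2 (ta a) (fti q.2) x))) := by
    intro q _
    rw [Lip_add hU (ta a) (hfti q.1) (hfti q.2) q.1 hx,
      Lip_add hU (ta a) (hfti q.1) (hfti q.2) q.2 hx]
  rw [LHSeq, Finset.sum_congr rfl pairEq]
  exact alg d (a x) ((1 / 12) * h ^ 4) (h ^ 2) (fun i => fti i x)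
    (fun i j => Lip i (ta a) (fti j) x)
end

section
/- Let d ≥ 2, a smooth and positive on the closure of Ω = (0,1)^d, ã := -ln a, and let C_p(c*) := Σ_{1 ≤ i < j ≤ d} C_{p,i,j}(c*) - (d-2) Σ_{i=1}^d C_{p,i}(c*) be the combined d-dimensional compact 4th-order stencil coefficients built from the one-axis coefficients C_{p,i} and two-axis coefficients C_{p,i,j}. Then the stencil is symmetric: for every h > 0, every c* ∈ Ω_h and every p ∈ S = {-1,0,1}^d with c* + ph ∈ Ω_h, one has C_p(c*) = C_{-p}(c* + ph). -/
open Finset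

namespace PaperFDM

lemma shift_neg (x : Fin d → ℝ) (p : Fin d → ℤ) (h : ℝ) :
    shiftPt (shiftPt x p h) (-p) (h / 2) = shiftPt x p (h / 2) := by
  funext i
  simp only [shiftPt, Pi.neg_apply, Int.cast_neg]
  ring

lemma shift_zero (x : Fin d → ℝ) (h : ℝ) : shiftPt x (0 : Fin d → ℤ) h = x := by
  funext i
  simp [shiftPt]

lemma negcond (p q : Fin d → ℤ) : (-p = q ∨ -p = -q) ↔ (p = q ∨ p = -q) := by
  rw [neg_eq_iff_eq_neg, neg_eq_iff_eq_neg, neg_neg, or_comm]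

lemma negzero (p : Fin d → ℤ) : (-p = 0) ↔ (p = 0) := neg_eq_zero

lemma oneAxisC_symm (a : (Fin d → ℝ) → ℝ) (i : Fin d) (h : ℝ) (p : Fin d → ℤ)
    (x : Fin d → ℝ) :
    oneAxisC a i h (-p) (shiftPt x p h) = oneAxisC a i h p x := by
  by_cases hp : p = 0
  · subst hp
    rw [neg_zero, shift_zero]
  · unfold oneAxisC
    simp only [negcond, negzero, shift_neg, if_neg hp]

lemma twoAxisCnz_symm (a : (Fin d → ℝ) → ℝ) (i j : Fin d) (h : ℝ) (p : Fin d → ℤ)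
    (x : Fin d → ℝ) :
    twoAxisCnz a i j h (-p) (shiftPt x p h) = twoAxisCnz a i j h p x := by
  unfold twoAxisCnz
  simp only [negcond, shift_neg]

lemma twoAxisC_symm (a : (Fin d → ℝ) → ℝ) (i j : Fin d) (h : ℝ) (p : Fin d → ℤ)
    (x : Fin d → ℝ) :
    twoAxisC a i j h (-p) (shiftPt x p h) = twoAxisC a i j h p x := by
  by_cases hp : p = 0
  · subst hp
    rw [neg_zero, shift_zero]
  · unfold twoAxisC
    rw [if_neg (by simpa [negzero] using hp), if_neg hp, twoAxisCnz_symm]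

lemma combC_symm (a : (Fin d → ℝ) → ℝ) (h : ℝ) (p : Fin d → ℤ) (x : Fin d → ℝ) :
    combC a h (-p) (shiftPt x p h) = combC a h p x := by
  unfold combC
  congr 1
  · exact Finset.sum_congr rfl fun q _ => twoAxisC_symm a q.1 q.2 h p x
  · congr 1
    exact Finset.sum_congr rfl fun i _ => oneAxisC_symm a i h p x

end PaperFDM

open PaperFDM Finset in
/-- the combined `d`-dimensional compact 4th-order stencil is symmetric:
`C_p(c*) = C_{-p}(c* + ph)` for all grid points `c*, c* + ph ∈ Ω_h` and all `p ∈ S`. -/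
theorem statement_19 (d : ℕ) (hd : 2 ≤ d) (a : (Fin d → ℝ) → ℝ)
    (ha : ContDiff ℝ (⊤ : ℕ∞) a) (hapos : ∀ x ∈ OmegaCl d, 0 < a x) :
    ∀ h : ℝ, 0 < h →
      ∀ x : Fin d → ℝ, (x ∈ Omega d ∧ ∀ i, ∃ m : ℤ, x i = (m : ℝ) * h) →
      ∀ p ∈ Sd d,
        (shiftPt x p h ∈ Omega d ∧ ∀ i, ∃ m : ℤ, shiftPt x p h i = (m : ℝ) * h) →
        combC a h p x = combC a h (-p) (shiftPt x p h) := by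
  intro h hh x hx p hp hx2
  exact (combC_symm a h p x).symm
end
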